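/- Let (t_k) be a sequence of positive reals with t_k → 0, and for each k let (x^k,y^k) be a Karush–Kuhn–Tucker point of the Scholtes-type regularization S(t_k) with multipliers (λ^k,μ^k,η^k,ν^k) (multipliers not indexed by an active index set are set to zero). Suppose (x^k,y^k) → (x̄,ȳ) and MPOC-LICQ holds at (x̄,ȳ). Then (x̄,ȳ) is a T-stationary point of the regularized continuous reformulation R with multipliers (λ̄,μ̄,σ̄,ϱ̄) satisfying: (a) λ^k → λ̄ and μ^k → μ̄; (b) (η≥,k_i − η≤,k_i)·y^k_i → σ̄_{1,i} for all i ∈ a01(x̄,ȳ); (c) ν^k_i + (η≥,k_i − η≤,k_i)·x^k_i → σ̄_{2,i} for all i ∈ a10(x̄,ȳ); (d) (η≥,k_i − η≤,k_i)·y^k_i → ϱ̄_{1,i} and ν^k_i + (η≥,k_i − η≤,k_i)·x^k_i → ϱ̄_{2,i} for all i ∈ a00(x̄,ȳ). -/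

import Mathlib

/-!
Put `σ₁ = (η≥ - η≤) y` and `σ₂ = ν + (η≥ - η≤) x`. As `ν_i y_i = 0`, the KKT equation of `S(t)`
reads `(∇f(x), c) = ∑ λ_p (∇h_p, 0) + ∑ μ₁_q (∇g_q, 0) - ∑ μ₂_i (0, e_i) + μ₃ (0, e)
+ ∑ (σ₁_i (e_i, 0) + σ₂_i (0, e_i))`, and `σ₁_i x_i = σ₂_i y_i`. Near `(x̄, ȳ)` the multipliers of
constraints inactive at `(x̄, ȳ)` vanish, and for `i ∈ a01` (resp. `a10`) the `i`-th pair equals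
`σ₁_i ((e_i, 0) + (x_i / y_i) (0, e_i))` (resp. `σ₂_i ((0, e_i) + (y_i / x_i) (e_i, 0))`), where the
ratio tends to `0`. So the multipliers are the coefficients of `(∇f(x), c)` in a family of vectors
converging to the MPOC-LICQ family, and linear independence of the limit family makes the
coefficients converge. The limit coefficients satisfy the T-stationarity equation, and their signs
pass to the limit.
-/

open scoped Classical
open Finset Filter Topology

noncomputable section
namespace Scholtes

/-- Vectors in ℝⁿ. -/
abbrev Vec (n : ℕ) := Fin n → ℝ

variable {n : ℕ} {P Q : Type*} [Fintype P] [Fintype Q]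

/-- Euclidean dot product. -/
def dot (u v : Vec n) : ℝ := ∑ i, u i * v i

/-- Gradient: vector of partial derivatives. -/
def grad (f : Vec n → ℝ) (x : Vec n) : Vec n := fun i => fderiv ℝ f x (Pi.single i 1)

/-- Hessian bilinear form of `L` at `z`, evaluated at directions `ξ`, `ζ`. -/
def hess (L : Vec n × Vec n → ℝ) (z ξ ζ : Vec n × Vec n) : ℝ :=
  fderiv ℝ (fun w => fderiv ℝ L w ξ) z ζ

/-- The pair vector (e_i, 0) ∈ ℝ²ⁿ. -/
def ex (i : Fin n) : Vec n × Vec n := (Pi.single i 1, 0)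

/-- The pair vector (0, e_i) ∈ ℝ²ⁿ. -/
def ey (i : Fin n) : Vec n × Vec n := (0, Pi.single i 1)

/-- The pair vector (0, e) ∈ ℝ²ⁿ, where e is the all-ones vector. -/
def eAll : Vec n × Vec n := (0, fun _ => 1)

/-- The pair vector (y_i e_i, x_i e_i) ∈ ℝ²ⁿ. -/
def hvec (x y : Vec n) (i : Fin n) : Vec n × Vec n := (Pi.single i (y i), Pi.single i (x i))

/-- The number of negative eigenvalues of the bilinear form `B` restricted to the
(sub)space `T`, expressed as the maximal dimension of a linear subspace of `T` on
which the associated quadratic form is negative definite. -/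
def negIndex (B : (Vec n × Vec n) → (Vec n × Vec n) → ℝ) (T : (Vec n × Vec n) → Prop) : ℕ :=
  sSup {d : ℕ | ∃ W : Submodule ℝ (Vec n × Vec n),
    (∀ ξ ∈ W, T ξ) ∧ Module.finrank ℝ W = d ∧ ∀ ξ ∈ W, ξ ≠ 0 → B ξ ξ < 0}

/-- The data and standing assumptions of the paper: objective `f`, equality
constraints `h`, inequality constraints `g`, positive pairwise different linear
coefficients `c`, cardinality bound `s` and regularization parameter `ε`. -/
structure Setting (n : ℕ) (P Q : Type*) [Fintype P] [Fintype Q] where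
  f : Vec n → ℝ
  h : P → Vec n → ℝ
  g : Q → Vec n → ℝ
  c : Vec n
  s : ℕ
  ε : ℝ
  hn : 1 ≤ n
  hf : ContDiff ℝ 2 f
  hh : ∀ p, ContDiff ℝ 2 (h p)
  hg : ∀ q, ContDiff ℝ 2 (g q)
  hcpos : ∀ i, 0 < c i
  hcinj : Function.Injective c
  hs : s < n
  hεpos : 0 < ε
  hεle : ε ≤ 1 / ((n : ℝ) - s)

/-- Index set a01: x̄_i = 0, ȳ_i > 0. -/
def a01 (x y : Vec n) : Finset (Fin n) := univ.filter fun i => x i = 0 ∧ 0 < y i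

/-- Index set a10: x̄_i ≠ 0, ȳ_i = 0. -/
def a10 (x y : Vec n) : Finset (Fin n) := univ.filter fun i => x i ≠ 0 ∧ y i = 0

/-- Index set a00: x̄_i = 0, ȳ_i = 0. -/
def a00 (x y : Vec n) : Finset (Fin n) := univ.filter fun i => x i = 0 ∧ y i = 0

/-- Index set N(y): y_i = 0. -/
def Nact (y : Vec n) : Finset (Fin n) := univ.filter fun i => y i = 0

/-- Index set H≥(x,y): x_i y_i = −t. -/
def Hge (t : ℝ) (x y : Vec n) : Finset (Fin n) := univ.filter fun i => x i * y i = -t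

/-- Index set H≤(x,y): x_i y_i = t. -/
def Hle (t : ℝ) (x y : Vec n) : Finset (Fin n) := univ.filter fun i => x i * y i = t

/-- Index set H(x,y) = H≥ ∪ H≤. -/
def Hact (t : ℝ) (x y : Vec n) : Finset (Fin n) := Hge t x y ∪ Hle t x y

/-- Active inequality constraints Q0(x). -/
def Q0 (D : Setting n P Q) (x : Vec n) : Finset Q := univ.filter fun q => D.g q x = 0

/-- Active upper bounds E(y): y_i = 1 + ε. -/
def Eact (D : Setting n P Q) (y : Vec n) : Finset (Fin n) := univ.filter fun i => y i = 1 + D.ε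

/-- Index set O(x,y) = complement of E(y) ∪ N(y) ∪ H(x,y). -/
def Oact (D : Setting n P Q) (t : ℝ) (x y : Vec n) : Finset (Fin n) :=
  (Eact D y ∪ Nact y ∪ Hact t x y)ᶜ

/-- Feasibility for the regularized continuous reformulation R. -/
def feasR (D : Setting n P Q) (x y : Vec n) : Prop :=
  (∀ p, D.h p x = 0) ∧ (∀ q, 0 ≤ D.g q x) ∧ ((n : ℝ) - D.s ≤ ∑ i, y i) ∧
  (∀ i, x i * y i = 0) ∧ (∀ i, 0 ≤ y i ∧ y i ≤ 1 + D.ε)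

/-- Feasibility for the Scholtes-type regularization S(t). -/
def feasS (D : Setting n P Q) (t : ℝ) (x y : Vec n) : Prop :=
  (∀ p, D.h p x = 0) ∧ (∀ q, 0 ≤ D.g q x) ∧ ((n : ℝ) - D.s ≤ ∑ i, y i) ∧
  (∀ i, -t ≤ x i * y i ∧ x i * y i ≤ t) ∧ (∀ i, 0 ≤ y i ∧ y i ≤ 1 + D.ε)

/-- Multipliers for T-stationarity (defined on the whole index ranges). -/
structure TMult (n : ℕ) (P Q : Type*) where
  lam : P → ℝ
  mu1 : Q → ℝ
  mu2 : Fin n → ℝ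
  mu3 : ℝ
  sig1 : Fin n → ℝ
  sig2 : Fin n → ℝ
  rho1 : Fin n → ℝ
  rho2 : Fin n → ℝ

/-- The T-stationarity equation (1) of Definition 2. -/
def TStatEq (D : Setting n P Q) (x y : Vec n) (M : TMult n P Q) : Prop :=
  ((grad D.f x, D.c) : Vec n × Vec n) =
    (∑ p, M.lam p • ((grad (D.h p) x, (0 : Vec n)) : Vec n × Vec n))
    + (∑ q ∈ Q0 D x, M.mu1 q • ((grad (D.g q) x, (0 : Vec n)) : Vec n × Vec n))
    - (∑ i ∈ Eact D y, M.mu2 i • ey i)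
    + M.mu3 • eAll
    + (∑ i ∈ a01 x y, M.sig1 i • ex i)
    + (∑ i ∈ a10 x y, M.sig2 i • ey i)
    + (∑ i ∈ a00 x y, (M.rho1 i • ex i + M.rho2 i • ey i))

/-- (x,y) is a T-stationary point of R with multipliers M. -/
def TStatAt (D : Setting n P Q) (x y : Vec n) (M : TMult n P Q) : Prop :=
  feasR D x y ∧
  (∀ q ∈ Q0 D x, 0 ≤ M.mu1 q) ∧
  (∀ i ∈ Eact D y, 0 ≤ M.mu2 i) ∧
  0 ≤ M.mu3 ∧
  M.mu3 * ((∑ i, y i) - ((n : ℝ) - D.s)) = 0 ∧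
  (∀ i ∈ a00 x y, M.rho1 i = 0 ∨ M.rho2 i ≤ 0) ∧
  TStatEq D x y M

/-- (x,y) is a T-stationary point of R. -/
def TStat (D : Setting n P Q) (x y : Vec n) : Prop := ∃ M, TStatAt D x y M

/-- MPOC-tailored LICQ at a feasible point (x,y) of R: the indicated family of
vectors in ℝ²ⁿ is linearly independent. -/
def MPOC_LICQ (D : Setting n P Q) (x y : Vec n) : Prop :=
  ∀ (lam : P → ℝ) (mu1 : Q → ℝ) (mu2 : Fin n → ℝ) (mu3 : ℝ) (s1 s2 : Fin n → ℝ),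
    ((∑ i, y i) ≠ (n : ℝ) - D.s → mu3 = 0) →
    (∑ p, lam p • ((grad (D.h p) x, (0 : Vec n)) : Vec n × Vec n))
    + (∑ q ∈ Q0 D x, mu1 q • ((grad (D.g q) x, (0 : Vec n)) : Vec n × Vec n))
    + (∑ i ∈ Eact D y, mu2 i • ey i)
    + mu3 • eAll
    + (∑ i ∈ a01 x y ∪ a00 x y, s1 i • ex i)
    + (∑ i ∈ a10 x y ∪ a00 x y, s2 i • ey i) = 0 →
    (∀ p, lam p = 0) ∧ (∀ q ∈ Q0 D x, mu1 q = 0) ∧ (∀ i ∈ Eact D y, mu2 i = 0) ∧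
    mu3 = 0 ∧ (∀ i ∈ a01 x y ∪ a00 x y, s1 i = 0) ∧ (∀ i ∈ a10 x y ∪ a00 x y, s2 i = 0)

/-- The Lagrange function L^R associated with the T-stationary point (x̄,ȳ)
and multipliers M. -/
def LagR (D : Setting n P Q) (xb yb : Vec n) (M : TMult n P Q) (z : Vec n × Vec n) : ℝ :=
  D.f z.1 + dot D.c z.2
    - (∑ p, M.lam p * D.h p z.1)
    - (∑ q ∈ Q0 D xb, M.mu1 q * D.g q z.1)
    + (∑ i ∈ Eact D yb, M.mu2 i * (z.2 i - (1 + D.ε)))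
    - M.mu3 * ((∑ i, z.2 i) - ((n : ℝ) - D.s))
    - (∑ i ∈ a01 xb yb, M.sig1 i * z.1 i)
    - (∑ i ∈ a10 xb yb, M.sig2 i * z.2 i)
    - (∑ i ∈ a00 xb yb, (M.rho1 i * z.1 i + M.rho2 i * z.2 i))

/-- Membership in the tangent space T^R at (x̄,ȳ). -/
def inTR (D : Setting n P Q) (x y : Vec n) (ξ : Vec n × Vec n) : Prop :=
  (∀ p, dot (grad (D.h p) x) ξ.1 = 0) ∧
  (∀ q ∈ Q0 D x, dot (grad (D.g q) x) ξ.1 = 0) ∧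
  (∀ i ∈ Eact D y, ξ.2 i = 0) ∧
  ((∑ i, y i) = (n : ℝ) - D.s → (∑ i, ξ.2 i) = 0) ∧
  (∀ i ∈ a00 x y ∪ a01 x y, ξ.1 i = 0) ∧
  (∀ i ∈ a00 x y ∪ a10 x y, ξ.2 i = 0)

/-- Nondegenerate T-stationary point with multipliers M (NDT1–NDT4). -/
def NondegTStatAt (D : Setting n P Q) (x y : Vec n) (M : TMult n P Q) : Prop :=
  TStatAt D x y M ∧
  MPOC_LICQ D x y ∧
  (∀ q ∈ Q0 D x, 0 < M.mu1 q) ∧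
  (∀ i ∈ Eact D y, 0 < M.mu2 i) ∧
  ((∑ i, y i) = (n : ℝ) - D.s → 0 < M.mu3) ∧
  (∀ i ∈ a00 x y, M.rho1 i ≠ 0 ∧ M.rho2 i < 0) ∧
  (∀ ξ, inTR D x y ξ → (∀ ζ, inTR D x y ζ → hess (LagR D x y M) (x, y) ξ ζ = 0) → ξ = 0)

/-- T-index: quadratic index (number of negative eigenvalues of the restricted
Hessian of L^R) plus the biactive index |a00|. -/
def TIndex (D : Setting n P Q) (x y : Vec n) (M : TMult n P Q) : ℕ :=
  negIndex (hess (LagR D x y M) (x, y)) (inTR D x y) + (a00 x y).card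

/-- Multipliers for KKT points of S(t) (defined on the whole index ranges). -/
structure SMult (n : ℕ) (P Q : Type*) where
  lam : P → ℝ
  mu1 : Q → ℝ
  mu2 : Fin n → ℝ
  mu3 : ℝ
  etaGe : Fin n → ℝ
  etaLe : Fin n → ℝ
  nu : Fin n → ℝ

/-- The KKT equation for S(t). -/
def KKTEq (D : Setting n P Q) (t : ℝ) (x y : Vec n) (M : SMult n P Q) : Prop :=
  ((grad D.f x, D.c) : Vec n × Vec n) =
    (∑ p, M.lam p • ((grad (D.h p) x, (0 : Vec n)) : Vec n × Vec n))
    + (∑ q ∈ Q0 D x, M.mu1 q • ((grad (D.g q) x, (0 : Vec n)) : Vec n × Vec n))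
    - (∑ i ∈ Eact D y, M.mu2 i • ey i)
    + M.mu3 • eAll
    + (∑ i ∈ Hge t x y, M.etaGe i • hvec x y i)
    - (∑ i ∈ Hle t x y, M.etaLe i • hvec x y i)
    + (∑ i ∈ Nact y, M.nu i • ey i)

/-- (x,y) is a KKT point of S(t) with multipliers M. -/
def KKTAt (D : Setting n P Q) (t : ℝ) (x y : Vec n) (M : SMult n P Q) : Prop :=
  feasS D t x y ∧
  (∀ q ∈ Q0 D x, 0 ≤ M.mu1 q) ∧
  (∀ i ∈ Eact D y, 0 ≤ M.mu2 i) ∧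
  0 ≤ M.mu3 ∧
  M.mu3 * ((∑ i, y i) - ((n : ℝ) - D.s)) = 0 ∧
  (∀ i ∈ Hge t x y, 0 ≤ M.etaGe i) ∧
  (∀ i ∈ Hle t x y, 0 ≤ M.etaLe i) ∧
  (∀ i ∈ Nact y, 0 ≤ M.nu i) ∧
  KKTEq D t x y M

/-- (x,y) is a KKT point of S(t). -/
def KKT (D : Setting n P Q) (t : ℝ) (x y : Vec n) : Prop := ∃ M, KKTAt D t x y M

/-- LICQ at a feasible point (x,y) of S(t). -/
def LICQ (D : Setting n P Q) (t : ℝ) (x y : Vec n) : Prop :=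
  ∀ (lam : P → ℝ) (mu1 : Q → ℝ) (mu2 : Fin n → ℝ) (mu3 : ℝ) (eta nu : Fin n → ℝ),
    ((∑ i, y i) ≠ (n : ℝ) - D.s → mu3 = 0) →
    (∑ p, lam p • ((grad (D.h p) x, (0 : Vec n)) : Vec n × Vec n))
    + (∑ q ∈ Q0 D x, mu1 q • ((grad (D.g q) x, (0 : Vec n)) : Vec n × Vec n))
    + (∑ i ∈ Eact D y, mu2 i • ey i)
    + mu3 • eAll
    + (∑ i ∈ Hact t x y, eta i • hvec x y i)
    + (∑ i ∈ Nact y, nu i • ey i) = 0 →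
    (∀ p, lam p = 0) ∧ (∀ q ∈ Q0 D x, mu1 q = 0) ∧ (∀ i ∈ Eact D y, mu2 i = 0) ∧
    mu3 = 0 ∧ (∀ i ∈ Hact t x y, eta i = 0) ∧ (∀ i ∈ Nact y, nu i = 0)

/-- The Lagrange function L^S associated with the KKT point (x̄,ȳ) of S(t)
and multipliers M. -/
def LagS (D : Setting n P Q) (t : ℝ) (xb yb : Vec n) (M : SMult n P Q)
    (z : Vec n × Vec n) : ℝ :=
  D.f z.1 + dot D.c z.2
    - (∑ p, M.lam p * D.h p z.1)
    - (∑ q ∈ Q0 D xb, M.mu1 q * D.g q z.1)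
    + (∑ i ∈ Eact D yb, M.mu2 i * (z.2 i - (1 + D.ε)))
    - M.mu3 * ((∑ i, z.2 i) - ((n : ℝ) - D.s))
    - (∑ i ∈ Hge t xb yb, M.etaGe i * (z.1 i * z.2 i + t))
    + (∑ i ∈ Hle t xb yb, M.etaLe i * (z.1 i * z.2 i - t))
    - (∑ i ∈ Nact yb, M.nu i * z.2 i)

/-- Membership in the tangent space T^S at (x,y) for S(t). -/
def inTS (D : Setting n P Q) (t : ℝ) (x y : Vec n) (ξ : Vec n × Vec n) : Prop :=
  (∀ p, dot (grad (D.h p) x) ξ.1 = 0) ∧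
  (∀ q ∈ Q0 D x, dot (grad (D.g q) x) ξ.1 = 0) ∧
  (∀ i ∈ Eact D y, ξ.2 i = 0) ∧
  ((∑ i, y i) = (n : ℝ) - D.s → (∑ i, ξ.2 i) = 0) ∧
  (∀ i ∈ Hact t x y, y i * ξ.1 i + x i * ξ.2 i = 0) ∧
  (∀ i ∈ Nact y, ξ.2 i = 0)

/-- Nondegenerate KKT point of S(t) with multipliers M (ND1–ND3). -/
def NondegKKTAt (D : Setting n P Q) (t : ℝ) (x y : Vec n) (M : SMult n P Q) : Prop :=
  KKTAt D t x y M ∧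
  LICQ D t x y ∧
  (∀ q ∈ Q0 D x, 0 < M.mu1 q) ∧
  (∀ i ∈ Eact D y, 0 < M.mu2 i) ∧
  (∀ i ∈ Hge t x y, 0 < M.etaGe i) ∧
  (∀ i ∈ Hle t x y, 0 < M.etaLe i) ∧
  (∀ i ∈ Nact y, 0 < M.nu i) ∧
  ((∑ i, y i) = (n : ℝ) - D.s → 0 < M.mu3) ∧
  (∀ ξ, inTS D t x y ξ → (∀ ζ, inTS D t x y ζ → hess (LagS D t x y M) (x, y) ξ ζ = 0) → ξ = 0)

/-- Quadratic index of a KKT point of S(t): number of negative eigenvalues of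
the restricted Hessian of L^S. -/
def QIdx (D : Setting n P Q) (t : ℝ) (x y : Vec n) (M : SMult n P Q) : ℕ :=
  negIndex (hess (LagS D t x y M) (x, y)) (inTS D t x y)

end Scholtes

section CoefficientLimits

variable {α 𝕜 E F : Type*} [NontriviallyNormedField 𝕜] [CompleteSpace 𝕜]
  [NormedAddCommGroup E] [NormedSpace 𝕜 E] [FiniteDimensional 𝕜 E]
  [NormedAddCommGroup F] [NormedSpace 𝕜 F] [FiniteDimensional 𝕜 F]
  {l : Filter α} [l.NeBot]

theorem exists_tendsto_of_tendsto_apply_of_injective {T : α → E →L[𝕜] F} {T₀ : E →L[𝕜] F}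
    (hT : Tendsto T l (𝓝 T₀)) (hT₀ : Function.Injective T₀) {w : α → E} {c₀ : F}
    (hc : Tendsto (fun k => T k (w k)) l (𝓝 c₀)) :
    ∃ w₀, Tendsto w l (𝓝 w₀) ∧ T₀ w₀ = c₀ := by
  have := FiniteDimensional.complete 𝕜 E
  obtain ⟨L, hL⟩ :=
    (T₀ : E →ₗ[𝕜] F).exists_leftInverse_of_injective (LinearMap.ker_eq_bot.mpr hT₀)
  let L' : F →L[𝕜] E := LinearMap.toContinuousLinearMap L
  have hLT₀ : L'.comp T₀ = 1 := ContinuousLinearMap.ext fun w => LinearMap.congr_fun hL w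
  -- `L' ∘ T k → 1`, so eventually `w k = (L' ∘ T k)⁻¹ (L' (T k (w k)))`.
  have hA : Tendsto (fun k => L'.comp (T k)) l (𝓝 1) :=
    hLT₀ ▸ ((ContinuousLinearMap.compL 𝕜 E F E L').continuous.tendsto T₀).comp hT
  have hunit : ∀ᶠ k in l, IsUnit (L'.comp (T k)) :=
    hA.eventually (Units.isOpen.mem_nhds isUnit_one)
  have hinv : Tendsto (fun k => Ring.inverse (L'.comp (T k))) l (𝓝 1) := by
    have h := (NormedRing.inverse_continuousAt (1 : (E →L[𝕜] E)ˣ)).tendsto.comp hA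
    rwa [Units.val_one, Ring.inverse_one] at h
  have hw : Tendsto w l (𝓝 (L' c₀)) := by
    have h := isBoundedBilinearMap_apply.continuous.tendsto (1, L' c₀) |>.comp
      (hinv.prodMk_nhds ((L'.continuous.tendsto c₀).comp hc))
    refine (h.congr' ?_).trans (by simp)
    filter_upwards [hunit] with k hk
    simp [← ContinuousLinearMap.comp_apply, ← ContinuousLinearMap.mul_def,
      Ring.inverse_mul_cancel _ hk]
  refine ⟨L' c₀, hw, tendsto_nhds_unique ?_ hc⟩
  exact isBoundedBilinearMap_apply.continuous.tendsto (T₀, L' c₀) |>.comp (hT.prodMk_nhds hw)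

theorem LinearIndependent.exists_tendsto_coeffs {ι : Type*} [Fintype ι] {v : α → ι → F}
    {v₀ : ι → F} (hv₀ : LinearIndependent 𝕜 v₀) (hv : Tendsto v l (𝓝 v₀)) {w : α → ι → 𝕜}
    {c₀ : F} (hc : Tendsto (fun k => ∑ i, w k i • v k i) l (𝓝 c₀)) :
    ∃ w₀, Tendsto w l (𝓝 w₀) ∧ ∑ i, w₀ i • v₀ i = c₀ := by
  let Φ : (ι → F) →ₗ[𝕜] (ι → 𝕜) →L[𝕜] F :=
    LinearMap.toContinuousLinearMap.toLinearMap ∘ₗ Fintype.bilinearCombination 𝕜 𝕜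
  have hΦ (u : ι → F) (a : ι → 𝕜) : Φ u a = ∑ i, a i • u i := rfl
  have hT : Tendsto (fun k => Φ (v k)) l (𝓝 (Φ v₀)) :=
    (Φ.continuous_of_finiteDimensional.tendsto v₀).comp hv
  simpa only [hΦ] using exists_tendsto_of_tendsto_apply_of_injective hT
    hv₀.fintypeLinearCombination_injective (w := w) (c₀ := c₀) (by simpa only [hΦ] using hc)

end CoefficientLimits

namespace Scholtes

variable {n : ℕ} {P Q : Type*} [Fintype P] [Fintype Q]

abbrev MultIdx (n : ℕ) (P Q : Type*) := (P ⊕ Q) ⊕ ((Fin n ⊕ Unit) ⊕ (Fin n ⊕ Fin n))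

abbrev iLam (p : P) : MultIdx n P Q := .inl (.inl p)
abbrev iMu1 (q : Q) : MultIdx n P Q := .inl (.inr q)
abbrev iMu2 (i : Fin n) : MultIdx n P Q := .inr (.inl (.inl i))
abbrev iMu3 : MultIdx n P Q := .inr (.inl (.inr ()))
abbrev iSig1 (i : Fin n) : MultIdx n P Q := .inr (.inr (.inl i))
abbrev iSig2 (i : Fin n) : MultIdx n P Q := .inr (.inr (.inr i))

/-- The indices of the vectors in `MPOC_LICQ D xb yb`. -/
def mpocIdx (D : Setting n P Q) (xb yb : Vec n) : Finset (MultIdx n P Q) :=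
  (univ.disjSum (Q0 D xb)).disjSum
    (((Eact D yb).disjSum (univ.filter fun _ => (∑ i, yb i) = (n : ℝ) - D.s)).disjSum
      ((univ.filter (xb · = 0)).disjSum (univ.filter (yb · = 0))))

def gradFamily (D : Setting n P Q) (a θ₁ θ₂ : Vec n) : MultIdx n P Q → Vec n × Vec n :=
  Sum.elim (Sum.elim (fun p => (grad (D.h p) a, 0)) fun q => (grad (D.g q) a, 0))
    (Sum.elim (Sum.elim (fun i => -ey i) fun _ => eAll)
      (Sum.elim (fun i => ex i + θ₁ i • ey i) fun i => ey i + θ₂ i • ex i))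

theorem sum_mpocIdx_smul_gradFamily (D : Setting n P Q) (xb yb a θ₁ θ₂ : Vec n)
    (w : MultIdx n P Q → ℝ) :
    ∑ k ∈ mpocIdx D xb yb, w k • gradFamily D a θ₁ θ₂ k =
      (∑ p, w (iLam p) • ((grad (D.h p) a, 0) : Vec n × Vec n))
      + (∑ q ∈ Q0 D xb, w (iMu1 q) • ((grad (D.g q) a, 0) : Vec n × Vec n))
      - (∑ i ∈ Eact D yb, w (iMu2 i) • ey i)
      + (if (∑ i, yb i) = (n : ℝ) - D.s then w iMu3 else 0) • eAll
      + (∑ i ∈ univ.filter (xb · = 0), w (iSig1 i) • (ex i + θ₁ i • ey i))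
      + (∑ i ∈ univ.filter (yb · = 0), w (iSig2 i) • (ey i + θ₂ i • ex i)) := by
  simp only [mpocIdx, Finset.sum_disjSum, gradFamily, Sum.elim_inl, Sum.elim_inr, smul_neg,
    Finset.sum_neg_distrib, ite_smul, zero_smul, Finset.sum_filter, Fintype.sum_unique]
  abel

theorem a01_union_a00 {xb yb : Vec n} (hyb : ∀ i, 0 ≤ yb i) :
    a01 xb yb ∪ a00 xb yb = univ.filter (xb · = 0) := by
  ext i
  simp only [a01, a00, Finset.mem_union, Finset.mem_filter, Finset.mem_univ, true_and]
  rcases (hyb i).lt_or_eq with h | h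
  · simp [h, h.ne']
  · simp [← h]

theorem a10_union_a00 (xb yb : Vec n) : a10 xb yb ∪ a00 xb yb = univ.filter (yb · = 0) := by
  ext i
  simp only [a10, a00, Finset.mem_union, Finset.mem_filter, Finset.mem_univ, true_and]
  tauto

theorem sum_mpocIdx_smul_gradFamily_of_feasR {D : Setting n P Q} {xb yb : Vec n}
    (hfeas : feasR D xb yb) (w : MultIdx n P Q → ℝ) :
    ∑ k ∈ mpocIdx D xb yb, w k • gradFamily D xb 0 0 k =
      (∑ p, w (iLam p) • ((grad (D.h p) xb, 0) : Vec n × Vec n))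
      + (∑ q ∈ Q0 D xb, w (iMu1 q) • ((grad (D.g q) xb, 0) : Vec n × Vec n))
      - (∑ i ∈ Eact D yb, w (iMu2 i) • ey i)
      + (if (∑ i, yb i) = (n : ℝ) - D.s then w iMu3 else 0) • eAll
      + (∑ i ∈ a01 xb yb ∪ a00 xb yb, w (iSig1 i) • ex i)
      + (∑ i ∈ a10 xb yb ∪ a00 xb yb, w (iSig2 i) • ey i) := by
  rw [sum_mpocIdx_smul_gradFamily, a01_union_a00 fun i => (hfeas.2.2.2.2 i).1, a10_union_a00]
  simp only [Pi.zero_apply, zero_smul, add_zero]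

theorem MPOC_LICQ.linearIndependent {D : Setting n P Q} {xb yb : Vec n} (hfeas : feasR D xb yb)
    (hlicq : MPOC_LICQ D xb yb) :
    LinearIndependent ℝ fun k : mpocIdx D xb yb => gradFamily D xb 0 0 k := by
  rw [Fintype.linearIndependent_iff]
  intro g hg k
  let w : MultIdx n P Q → ℝ := fun kk => if h : kk ∈ mpocIdx D xb yb then g ⟨kk, h⟩ else 0
  have hgw (k : mpocIdx D xb yb) : g k = w k := by simp [w]
  simp only [hgw] at hg ⊢
  rw [Finset.sum_coe_sort (mpocIdx D xb yb) fun kk => w kk • gradFamily D xb 0 0 kk,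
    sum_mpocIdx_smul_gradFamily_of_feasR hfeas] at hg
  obtain ⟨hlam, hmu1, hmu2, hmu3, hsig1, hsig2⟩ := hlicq (fun p => w (iLam p))
    (fun q => w (iMu1 q)) (fun i => -w (iMu2 i))
    (if (∑ i, yb i) = (n : ℝ) - D.s then w iMu3 else 0) (fun i => w (iSig1 i))
    (fun i => w (iSig2 i)) (fun h => if_neg h) <| by
      rw [← hg]; simp only [neg_smul, Finset.sum_neg_distrib]; abel
  obtain ⟨((p | q) | (i | u) | i | i), hk⟩ := k <;>
    simp only [mpocIdx, Finset.inl_mem_disjSum, Finset.inr_mem_disjSum, Finset.mem_filter,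
      Finset.mem_univ, true_and] at hk
  · exact hlam p
  · exact hmu1 q hk
  · simpa using hmu2 i hk
  · simpa [hk] using hmu3
  · exact hsig1 i (by simpa [a01_union_a00 fun i => (hfeas.2.2.2.2 i).1] using hk)
  · exact hsig2 i (by simpa [a10_union_a00] using hk)

theorem disjoint_a01_a00 (xb yb : Vec n) : Disjoint (a01 xb yb) (a00 xb yb) :=
  Finset.disjoint_filter.mpr fun _ _ h1 h0 => h1.2.ne' h0.2

theorem disjoint_a10_a00 (xb yb : Vec n) : Disjoint (a10 xb yb) (a00 xb yb) :=
  Finset.disjoint_filter.mpr fun _ _ h1 h0 => h1.1 h0.1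

def TMult.ofCoeffs (w : MultIdx n P Q → ℝ) : TMult n P Q where
  lam p := w (iLam p)
  mu1 q := w (iMu1 q)
  mu2 i := w (iMu2 i)
  mu3 := w iMu3
  sig1 i := w (iSig1 i)
  sig2 i := w (iSig2 i)
  rho1 i := w (iSig1 i)
  rho2 i := w (iSig2 i)

theorem tStatEq_ofCoeffs {D : Setting n P Q} {xb yb : Vec n} (hfeas : feasR D xb yb)
    {w : MultIdx n P Q → ℝ} (hw : ∀ kk ∉ mpocIdx D xb yb, w kk = 0)
    (h : ∑ k ∈ mpocIdx D xb yb, w k • gradFamily D xb 0 0 k =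
      ((grad D.f xb, D.c) : Vec n × Vec n)) :
    TStatEq D xb yb (TMult.ofCoeffs w) := by
  have hmu3 : (if (∑ i, yb i) = (n : ℝ) - D.s then w iMu3 else 0) = w iMu3 := by
    split_ifs with hs
    · rfl
    · exact (hw _ (by simp [mpocIdx, hs])).symm
  rw [sum_mpocIdx_smul_gradFamily_of_feasR hfeas, hmu3, Finset.sum_union (disjoint_a01_a00 xb yb),
    Finset.sum_union (disjoint_a10_a00 xb yb)] at h
  rw [TStatEq, ← h]
  simp only [TMult.ofCoeffs, Finset.sum_add_distrib]
  abel

def SMult.sig1 (M : SMult n P Q) (y : Vec n) (i : Fin n) : ℝ := (M.etaGe i - M.etaLe i) * y i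

def SMult.sig2 (M : SMult n P Q) (x : Vec n) (i : Fin n) : ℝ :=
  M.nu i + (M.etaGe i - M.etaLe i) * x i

def SMult.coeffs (M : SMult n P Q) (x y : Vec n) : MultIdx n P Q → ℝ :=
  Sum.elim (Sum.elim M.lam M.mu1)
    (Sum.elim (Sum.elim M.mu2 fun _ => M.mu3) (Sum.elim (M.sig1 y) (M.sig2 x)))

structure SMult.VanishesOffActive (D : Setting n P Q) (t : ℝ) (x y : Vec n) (M : SMult n P Q) :
    Prop where
  mu1 : ∀ q ∉ Q0 D x, M.mu1 q = 0
  mu2 : ∀ i ∉ Eact D y, M.mu2 i = 0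
  etaGe : ∀ i ∉ Hge t x y, M.etaGe i = 0
  etaLe : ∀ i ∉ Hle t x y, M.etaLe i = 0
  nu : ∀ i ∉ Nact y, M.nu i = 0

namespace SMult.VanishesOffActive

variable {D : Setting n P Q} {t : ℝ} {x y : Vec n} {M : SMult n P Q}

theorem nu_mul_eq_zero (hM : M.VanishesOffActive D t x y) (i : Fin n) : M.nu i * y i = 0 := by
  by_cases hi : i ∈ Nact y
  · simp_all [Nact]
  · simp [hM.nu i hi]

theorem etaGe_mul_eq (hM : M.VanishesOffActive D t x y) (i : Fin n) :
    M.etaGe i * (x i * y i) = M.etaGe i * -t := by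
  by_cases hi : i ∈ Hge t x y
  · simp_all [Hge]
  · simp [hM.etaGe i hi]

theorem etaLe_mul_eq (hM : M.VanishesOffActive D t x y) (i : Fin n) :
    M.etaLe i * (x i * y i) = M.etaLe i * t := by
  by_cases hi : i ∈ Hle t x y
  · simp_all [Hle]
  · simp [hM.etaLe i hi]

theorem sig1_mul_eq_sig2_mul (hM : M.VanishesOffActive D t x y) (i : Fin n) :
    M.sig1 y i * x i = M.sig2 x i * y i := by
  linear_combination (norm := (simp only [SMult.sig1, SMult.sig2]; ring_nf)) -hM.nu_mul_eq_zero i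

theorem sig2_mul_eq (hM : M.VanishesOffActive D t x y) (i : Fin n) :
    M.sig2 x i * y i = -t * (M.etaGe i + M.etaLe i) := by
  linear_combination (norm := (simp only [SMult.sig2]; ring_nf))
    hM.nu_mul_eq_zero i + hM.etaGe_mul_eq i - hM.etaLe_mul_eq i

end SMult.VanishesOffActive

namespace KKTAt

variable {D : Setting n P Q} {t : ℝ} {x y : Vec n} {M : SMult n P Q}

theorem mu1_nonneg (hK : KKTAt D t x y M) (hM : M.VanishesOffActive D t x y) (q : Q) :
    0 ≤ M.mu1 q := by
  by_cases hq : q ∈ Q0 D x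
  · exact hK.2.1 q hq
  · exact (hM.mu1 q hq).ge

theorem mu2_nonneg (hK : KKTAt D t x y M) (hM : M.VanishesOffActive D t x y) (i : Fin n) :
    0 ≤ M.mu2 i := by
  by_cases hi : i ∈ Eact D y
  · exact hK.2.2.1 i hi
  · exact (hM.mu2 i hi).ge

theorem etaGe_nonneg (hK : KKTAt D t x y M) (hM : M.VanishesOffActive D t x y) (i : Fin n) :
    0 ≤ M.etaGe i := by
  by_cases hi : i ∈ Hge t x y
  · exact hK.2.2.2.2.2.1 i hi
  · exact (hM.etaGe i hi).ge

theorem etaLe_nonneg (hK : KKTAt D t x y M) (hM : M.VanishesOffActive D t x y) (i : Fin n) :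
    0 ≤ M.etaLe i := by
  by_cases hi : i ∈ Hle t x y
  · exact hK.2.2.2.2.2.2.1 i hi
  · exact (hM.etaLe i hi).ge

/-- As `σ₂ y_i = -t (η≥_i + η≤_i) ≤ 0`, a positive `σ₂` forces both `η`'s, hence `σ₁`,
to vanish. -/
theorem sig1_eq_zero_of_sig2_pos (ht : 0 < t) (hK : KKTAt D t x y M)
    (hM : M.VanishesOffActive D t x y) {i : Fin n} (hpos : 0 < M.sig2 x i) : M.sig1 y i = 0 := by
  have hge := hK.etaGe_nonneg hM i
  have hle := hK.etaLe_nonneg hM i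
  have hsum : M.etaGe i + M.etaLe i ≤ 0 := by
    have : 0 ≤ M.sig2 x i * y i := mul_nonneg hpos.le (hK.1.2.2.2.2 i).1
    nlinarith [hM.sig2_mul_eq i]
  simp [SMult.sig1, show M.etaGe i = 0 by linarith, show M.etaLe i = 0 by linarith]

theorem grad_eq (hK : KKTAt D t x y M) (hM : M.VanishesOffActive D t x y) :
    ((grad D.f x, D.c) : Vec n × Vec n) =
      (∑ p, M.lam p • ((grad (D.h p) x, 0) : Vec n × Vec n))
      + (∑ q, M.mu1 q • ((grad (D.g q) x, 0) : Vec n × Vec n))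
      - (∑ i, M.mu2 i • ey i) + M.mu3 • eAll
      + ∑ i, (M.sig1 y i • ex i + M.sig2 x i • ey i) := by
  have hvec_eq (i : Fin n) : hvec x y i = y i • ex i + x i • ey i := by
    ext j <;> by_cases hj : j = i <;> simp [hvec, ex, ey, hj]
  obtain ⟨-, -, -, -, -, -, -, -, hkkt⟩ := hK
  rw [hkkt,
    Finset.sum_subset (subset_univ (Q0 D x)) fun q _ hq => by rw [hM.mu1 q hq, zero_smul],
    Finset.sum_subset (subset_univ (Eact D y)) fun i _ hi => by rw [hM.mu2 i hi, zero_smul],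
    Finset.sum_subset (subset_univ (Hge t x y)) fun i _ hi => by rw [hM.etaGe i hi, zero_smul],
    Finset.sum_subset (subset_univ (Hle t x y)) fun i _ hi => by rw [hM.etaLe i hi, zero_smul],
    Finset.sum_subset (subset_univ (Nact y)) fun i _ hi => by rw [hM.nu i hi, zero_smul]]
  simp only [hvec_eq, SMult.sig1, SMult.sig2, sub_mul, add_smul, sub_smul, smul_add, smul_smul,
    Finset.sum_add_distrib, Finset.sum_sub_distrib]
  abel

end KKTAt

def divOffZeros (b u v : Vec n) : Vec n := fun i => if b i = 0 then 0 else u i / v i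

theorem SMult.VanishesOffActive.sig1_smul_add_sig2_smul {D : Setting n P Q} {t : ℝ}
    {x y : Vec n} {M : SMult n P Q} (hM : M.VanishesOffActive D t x y) {xb yb : Vec n}
    {i : Fin n} (hb : xb i * yb i = 0) (hx : xb i ≠ 0 → x i ≠ 0) (hy : yb i ≠ 0 → y i ≠ 0) :
    M.sig1 y i • ex i + M.sig2 x i • ey i =
      (if xb i = 0 then M.sig1 y i • (ex i + divOffZeros yb x y i • ey i) else 0)
      + (if yb i = 0 then M.sig2 x i • (ey i + divOffZeros xb y x i • ex i) else 0) := by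
  have hσ := hM.sig1_mul_eq_sig2_mul i
  by_cases hxb : xb i = 0 <;> by_cases hyb : yb i = 0
  · simp [divOffZeros, hxb, hyb]
  · have hσ₂ : M.sig2 x i = M.sig1 y i * (x i / y i) := by
      field_simp [hy hyb]; linarith
    simp [divOffZeros, hxb, hyb, hσ₂, smul_add, smul_smul]
  · have hσ₁ : M.sig1 y i = M.sig2 x i * (y i / x i) := by
      field_simp [hx hxb]; linarith
    simp [divOffZeros, hxb, hyb, hσ₁, smul_add, smul_smul, add_comm]
  · exact absurd hb (mul_ne_zero hxb hyb)

theorem KKTAt.sum_mpocIdx_coeffs_smul_gradFamily {D : Setting n P Q} {t : ℝ} {x y : Vec n}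
    {M : SMult n P Q} (hK : KKTAt D t x y M) (hM : M.VanishesOffActive D t x y) {xb yb : Vec n}
    (hfeas : feasR D xb yb) (hmu1 : ∀ q ∉ Q0 D xb, M.mu1 q = 0)
    (hmu2 : ∀ i ∉ Eact D yb, M.mu2 i = 0) (hmu3 : (∑ i, yb i) ≠ (n : ℝ) - D.s → M.mu3 = 0)
    (hx : ∀ i, xb i ≠ 0 → x i ≠ 0) (hy : ∀ i, yb i ≠ 0 → y i ≠ 0) :
    ∑ k ∈ mpocIdx D xb yb, M.coeffs x y k • gradFamily D x (divOffZeros yb x y)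
      (divOffZeros xb y x) k = ((grad D.f x, D.c) : Vec n × Vec n) := by
  have hQ0 : ∑ q ∈ Q0 D xb, M.mu1 q • ((grad (D.g q) x, 0) : Vec n × Vec n) =
      ∑ q, M.mu1 q • ((grad (D.g q) x, 0) : Vec n × Vec n) :=
    Finset.sum_subset (subset_univ _) fun q _ hq => by rw [hmu1 q hq, zero_smul]
  have hE : ∑ i ∈ Eact D yb, M.mu2 i • ey i = ∑ i, M.mu2 i • ey i :=
    Finset.sum_subset (subset_univ _) fun i _ hi => by rw [hmu2 i hi, zero_smul]
  have hs : (if (∑ i, yb i) = (n : ℝ) - D.s then M.mu3 else 0) = M.mu3 := by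
    split_ifs with hs
    · rfl
    · exact (hmu3 hs).symm
  have hsig : ∑ i, (M.sig1 y i • ex i + M.sig2 x i • ey i) =
      (∑ i ∈ univ.filter (xb · = 0), M.sig1 y i • (ex i + divOffZeros yb x y i • ey i))
      + ∑ i ∈ univ.filter (yb · = 0), M.sig2 x i • (ey i + divOffZeros xb y x i • ex i) := by
    rw [Finset.sum_filter, Finset.sum_filter, ← Finset.sum_add_distrib]
    exact Finset.sum_congr rfl fun i _ =>
      hM.sig1_smul_add_sig2_smul (hfeas.2.2.2.1 i) (hx i) (hy i)
  rw [sum_mpocIdx_smul_gradFamily, hK.grad_eq hM, hsig]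
  simp only [SMult.coeffs, Sum.elim_inl, Sum.elim_inr, hQ0, hE, hs, add_assoc]

theorem continuous_grad {f : Vec n → ℝ} (hf : ContDiff ℝ 1 f) : Continuous (grad f) :=
  continuous_pi fun _ => (hf.continuous_fderiv one_ne_zero).clm_apply continuous_const

theorem continuous_gradFamily (D : Setting n P Q) :
    Continuous fun a : Vec n × Vec n × Vec n => gradFamily D a.1 a.2.1 a.2.2 := by
  have hh p := continuous_grad ((D.hh p).of_le one_le_two)
  have hg q := continuous_grad ((D.hg q).of_le one_le_two)
  refine continuous_pi fun kk => ?_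
  rcases kk with (p | q) | (i | u) | i | i <;> simp only [gradFamily, Sum.elim_inl, Sum.elim_inr]
  all_goals fun_prop

section Limits

variable {α : Type*} {l : Filter α}

theorem tendsto_divOffZeros {u v : α → Vec n} {u₀ v₀ : Vec n} (hu : Tendsto u l (𝓝 u₀))
    (hv : Tendsto v l (𝓝 v₀)) (h : ∀ i, u₀ i * v₀ i = 0) :
    Tendsto (fun k => divOffZeros v₀ (u k) (v k)) l (𝓝 0) := by
  refine tendsto_pi_nhds.mpr fun i => ?_
  by_cases hv₀ : v₀ i = 0
  · simpa [divOffZeros, hv₀] using tendsto_const_nhds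
  · have hu₀ : u₀ i = 0 := (mul_eq_zero.mp (h i)).resolve_right hv₀
    have h := (tendsto_pi_nhds.mp hu i).div (tendsto_pi_nhds.mp hv i) hv₀
    rw [hu₀, zero_div] at h
    exact h.congr fun k => by simp [divOffZeros, hv₀]

theorem eventually_forall_ne_zero {u : α → Vec n} {u₀ : Vec n} (hu : Tendsto u l (𝓝 u₀)) :
    ∀ᶠ k in l, ∀ i, u₀ i ≠ 0 → u k i ≠ 0 := by
  refine eventually_all.mpr fun i => ?_
  by_cases h : u₀ i = 0
  · simp [h]
  · exact ((tendsto_pi_nhds.mp hu i).eventually_ne h).mono fun k hk _ => hk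

variable {D : Setting n P Q} {t : α → ℝ} {X Y : α → Vec n} {Mk : α → SMult n P Q}
  {xb yb : Vec n}

theorem eventually_mu_eq_zero (hK : ∀ k, KKTAt D (t k) (X k) (Y k) (Mk k))
    (hM : ∀ k, (Mk k).VanishesOffActive D (t k) (X k) (Y k)) (hX : Tendsto X l (𝓝 xb))
    (hY : Tendsto Y l (𝓝 yb)) :
    ∀ᶠ k in l, (∀ q ∉ Q0 D xb, (Mk k).mu1 q = 0) ∧ (∀ i ∉ Eact D yb, (Mk k).mu2 i = 0) ∧
      ((∑ i, yb i) ≠ (n : ℝ) - D.s → (Mk k).mu3 = 0) := by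
  refine (eventually_all.mpr fun q => ?_).and ((eventually_all.mpr fun i => ?_).and ?_)
  · by_cases hq : q ∈ Q0 D xb
    · exact .of_forall fun _ h => absurd hq h
    have hg := ((D.hg q).continuous.tendsto xb).comp hX
    filter_upwards [hg.eventually_ne (by simpa [Q0] using hq)] with k hk _
    exact (hM k).mu1 q (by simpa [Q0] using hk)
  · by_cases hi : i ∈ Eact D yb
    · exact .of_forall fun _ h => absurd hi h
    filter_upwards [(tendsto_pi_nhds.mp hY i).eventually_ne (by simpa [Eact] using hi)]
      with k hk _
    exact (hM k).mu2 i (by simpa [Eact] using hk)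
  · by_cases hs : (∑ i, yb i) = (n : ℝ) - D.s
    · exact .of_forall fun _ h => absurd hs h
    have hsum : Tendsto (fun k => ∑ i, Y k i) l (𝓝 (∑ i, yb i)) :=
      tendsto_finsetSum _ fun i _ => tendsto_pi_nhds.mp hY i
    filter_upwards [hsum.eventually_ne hs] with k hk _
    exact (mul_eq_zero.mp (hK k).2.2.2.2.1).resolve_right (sub_ne_zero.mpr hk)

theorem exists_limit_coeffs [l.NeBot] (hK : ∀ k, KKTAt D (t k) (X k) (Y k) (Mk k))
    (hM : ∀ k, (Mk k).VanishesOffActive D (t k) (X k) (Y k)) (hX : Tendsto X l (𝓝 xb))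
    (hY : Tendsto Y l (𝓝 yb)) (hfeas : feasR D xb yb) (hlicq : MPOC_LICQ D xb yb) :
    ∃ w : MultIdx n P Q → ℝ, (∀ kk ∉ mpocIdx D xb yb, w kk = 0) ∧
      (∀ kk ∈ mpocIdx D xb yb, Tendsto (fun k => (Mk k).coeffs (X k) (Y k) kk) l (𝓝 (w kk))) ∧
      ∑ kk ∈ mpocIdx D xb yb, w kk • gradFamily D xb 0 0 kk =
        ((grad D.f xb, D.c) : Vec n × Vec n) := by
  have hθ₁ := tendsto_divOffZeros hX hY hfeas.2.2.2.1
  have hθ₂ := tendsto_divOffZeros hY hX fun i => mul_comm (yb i) (xb i) ▸ hfeas.2.2.2.1 i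
  have hv := ((continuous_gradFamily D).tendsto _).comp (hX.prodMk_nhds (hθ₁.prodMk_nhds hθ₂))
  have hc : Tendsto (fun k => ∑ kk : mpocIdx D xb yb, (Mk k).coeffs (X k) (Y k) kk •
      gradFamily D (X k) (divOffZeros yb (X k) (Y k)) (divOffZeros xb (Y k) (X k)) kk) l
      (𝓝 ((grad D.f xb, D.c) : Vec n × Vec n)) := by
    refine ((((continuous_grad (D.hf.of_le one_le_two)).tendsto xb).comp hX).prodMk_nhds
      tendsto_const_nhds).congr' ?_
    filter_upwards [eventually_mu_eq_zero hK hM hX hY, eventually_forall_ne_zero hX,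
      eventually_forall_ne_zero hY] with k ⟨hmu1, hmu2, hmu3⟩ hx hy
    rw [Finset.sum_coe_sort (mpocIdx D xb yb) fun kk => (Mk k).coeffs (X k) (Y k) kk • _,
      (hK k).sum_mpocIdx_coeffs_smul_gradFamily (hM k) hfeas hmu1 hmu2 hmu3 hx hy]
    rfl
  obtain ⟨w₀, hw, hw₀⟩ := (hlicq.linearIndependent hfeas).exists_tendsto_coeffs
    (tendsto_pi_nhds.mpr fun kk => tendsto_pi_nhds.mp hv kk) hc
  refine ⟨fun kk => if h : kk ∈ mpocIdx D xb yb then w₀ ⟨kk, h⟩ else 0, fun kk hkk => dif_neg hkk,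
    fun kk hkk => ?_, ?_⟩
  · simpa [dif_pos hkk] using tendsto_pi_nhds.mp hw ⟨kk, hkk⟩
  · rw [← hw₀, ← Finset.sum_coe_sort]
    simp

theorem tendsto_multipliers (hK : ∀ k, KKTAt D (t k) (X k) (Y k) (Mk k))
    (hM : ∀ k, (Mk k).VanishesOffActive D (t k) (X k) (Y k)) (hX : Tendsto X l (𝓝 xb))
    (hY : Tendsto Y l (𝓝 yb)) {w : MultIdx n P Q → ℝ} (hw0 : ∀ kk ∉ mpocIdx D xb yb, w kk = 0)
    (hw : ∀ kk ∈ mpocIdx D xb yb, Tendsto (fun k => (Mk k).coeffs (X k) (Y k) kk) l (𝓝 (w kk))) :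
    (∀ p, Tendsto (fun k => (Mk k).lam p) l (𝓝 (w (iLam p)))) ∧
    (∀ q, Tendsto (fun k => (Mk k).mu1 q) l (𝓝 (w (iMu1 q)))) ∧
    (∀ i, Tendsto (fun k => (Mk k).mu2 i) l (𝓝 (w (iMu2 i)))) ∧
    Tendsto (fun k => (Mk k).mu3) l (𝓝 (w iMu3)) ∧
    (∀ i, xb i = 0 → Tendsto (fun k => (Mk k).sig1 (Y k) i) l (𝓝 (w (iSig1 i)))) ∧
    (∀ i, yb i = 0 → Tendsto (fun k => (Mk k).sig2 (X k) i) l (𝓝 (w (iSig2 i)))) := by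
  have hw' kk (h : kk ∉ mpocIdx D xb yb → ∀ᶠ k in l, (Mk k).coeffs (X k) (Y k) kk = 0) :
      Tendsto (fun k => (Mk k).coeffs (X k) (Y k) kk) l (𝓝 (w kk)) := by
    by_cases hkk : kk ∈ mpocIdx D xb yb
    · exact hw kk hkk
    · rw [hw0 kk hkk]
      exact tendsto_const_nhds.congr' ((h hkk).mono fun k hk => hk.symm)
  have hmu := eventually_mu_eq_zero hK hM hX hY
  refine ⟨fun p => hw' (iLam p) (by simp [mpocIdx]), fun q => hw' (iMu1 q) fun hq => ?_,
    fun i => hw' (iMu2 i) fun hi => ?_, hw' iMu3 fun hs => ?_,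
    fun i hi => hw (iSig1 i) (by simpa [mpocIdx] using hi),
    fun i hi => hw (iSig2 i) (by simpa [mpocIdx] using hi)⟩
  · exact hmu.mono fun k hk => hk.1 q (by simpa [mpocIdx] using hq)
  · exact hmu.mono fun k hk => hk.2.1 i (by simpa [mpocIdx] using hi)
  · exact hmu.mono fun k hk => hk.2.2 fun h => hs (by simp [mpocIdx, h])

theorem sig1_limit_eq_zero_or_sig2_limit_nonpos [l.NeBot] (ht : ∀ k, 0 < t k)
    (hK : ∀ k, KKTAt D (t k) (X k) (Y k) (Mk k))
    (hM : ∀ k, (Mk k).VanishesOffActive D (t k) (X k) (Y k)) {i : Fin n} {a b : ℝ}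
    (ha : Tendsto (fun k => (Mk k).sig1 (Y k) i) l (𝓝 a))
    (hb : Tendsto (fun k => (Mk k).sig2 (X k) i) l (𝓝 b)) : a = 0 ∨ b ≤ 0 := by
  refine or_iff_not_imp_right.mpr fun hb₀ => tendsto_nhds_unique ha (tendsto_const_nhds.congr' ?_)
  filter_upwards [hb.eventually (eventually_gt_nhds (not_le.mp hb₀))] with k hk
  exact ((hK k).sig1_eq_zero_of_sig2_pos (ht k) (hM k) hk).symm

end Limits

theorem statement9_general {n : ℕ} {P Q : Type*} [Fintype P] [Fintype Q]
    (D : Setting n P Q) (t : ℕ → ℝ) (htpos : ∀ k, 0 < t k)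
    (X Y : ℕ → Vec n) (Mk : ℕ → SMult n P Q)
    (hK : ∀ k, KKTAt D (t k) (X k) (Y k) (Mk k))
    (hzero : ∀ k,
      (∀ q ∉ Q0 D (X k), (Mk k).mu1 q = 0) ∧
      (∀ i ∉ Eact D (Y k), (Mk k).mu2 i = 0) ∧
      (∀ i ∉ Hge (t k) (X k) (Y k), (Mk k).etaGe i = 0) ∧
      (∀ i ∉ Hle (t k) (X k) (Y k), (Mk k).etaLe i = 0) ∧
      (∀ i ∉ Nact (Y k), (Mk k).nu i = 0))
    (xb yb : Vec n)
    (hconv : Filter.Tendsto (fun k => ((X k, Y k) : Vec n × Vec n))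
      Filter.atTop (nhds (xb, yb)))
    (hfeas : feasR D xb yb) (hlicq : MPOC_LICQ D xb yb) :
    ∃ Mb : TMult n P Q, TStatAt D xb yb Mb ∧
      (∀ p, Filter.Tendsto (fun k => (Mk k).lam p) Filter.atTop (nhds (Mb.lam p))) ∧
      (∀ q, Filter.Tendsto (fun k => (Mk k).mu1 q) Filter.atTop (nhds (Mb.mu1 q))) ∧
      (∀ i, Filter.Tendsto (fun k => (Mk k).mu2 i) Filter.atTop (nhds (Mb.mu2 i))) ∧
      Filter.Tendsto (fun k => (Mk k).mu3) Filter.atTop (nhds Mb.mu3) ∧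
      (∀ i ∈ a01 xb yb,
        Filter.Tendsto (fun k => ((Mk k).etaGe i - (Mk k).etaLe i) * Y k i)
          Filter.atTop (nhds (Mb.sig1 i))) ∧
      (∀ i ∈ a10 xb yb,
        Filter.Tendsto (fun k => (Mk k).nu i + ((Mk k).etaGe i - (Mk k).etaLe i) * X k i)
          Filter.atTop (nhds (Mb.sig2 i))) ∧
      (∀ i ∈ a00 xb yb,
        Filter.Tendsto (fun k => ((Mk k).etaGe i - (Mk k).etaLe i) * Y k i)
          Filter.atTop (nhds (Mb.rho1 i)) ∧
        Filter.Tendsto (fun k => (Mk k).nu i + ((Mk k).etaGe i - (Mk k).etaLe i) * X k i)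
          Filter.atTop (nhds (Mb.rho2 i))) := by
  have hM k : (Mk k).VanishesOffActive D (t k) (X k) (Y k) :=
    let ⟨h1, h2, h3, h4, h5⟩ := hzero k; ⟨h1, h2, h3, h4, h5⟩
  have hX : Tendsto X atTop (𝓝 xb) := (continuous_fst.tendsto _).comp hconv
  have hY : Tendsto Y atTop (𝓝 yb) := (continuous_snd.tendsto _).comp hconv
  obtain ⟨w, hw0, hw, hweq⟩ := exists_limit_coeffs hK hM hX hY hfeas hlicq
  obtain ⟨hlam, hmu1, hmu2, hmu3, hsig1, hsig2⟩ := tendsto_multipliers hK hM hX hY hw0 hw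
  have hcompl : w iMu3 * ((∑ i, yb i) - ((n : ℝ) - D.s)) = 0 := by
    by_cases hs : (∑ i, yb i) = (n : ℝ) - D.s
    · rw [hs, sub_self, mul_zero]
    · rw [hw0 _ (by simp [mpocIdx, hs]), zero_mul]
  have ha00 i (hi : i ∈ a00 xb yb) : xb i = 0 ∧ yb i = 0 := (Finset.mem_filter.mp hi).2
  refine ⟨TMult.ofCoeffs w, ⟨hfeas, fun q _ => ?_, fun i _ => ?_, ?_, hcompl, fun i hi => ?_,
    tStatEq_ofCoeffs hfeas hw0 hweq⟩, hlam, hmu1, hmu2, hmu3,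
    fun i hi => hsig1 i (Finset.mem_filter.mp hi).2.1,
    fun i hi => hsig2 i (Finset.mem_filter.mp hi).2.2,
    fun i hi => ⟨hsig1 i (ha00 i hi).1, hsig2 i (ha00 i hi).2⟩⟩
  · exact ge_of_tendsto' (hmu1 q) fun k => (hK k).mu1_nonneg (hM k) q
  · exact ge_of_tendsto' (hmu2 i) fun k => (hK k).mu2_nonneg (hM k) i
  · exact ge_of_tendsto' hmu3 fun k => (hK k).2.2.2.1
  · exact sig1_limit_eq_zero_or_sig2_limit_nonpos htpos hK hM (hsig1 i (ha00 i hi).1)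
      (hsig2 i (ha00 i hi).2)

/-- Theorem 2 + Remark 1: convergence of the multipliers of KKT
points of S(t_k) (extended by zero off the active index sets) towards
T-stationarity multipliers of R at the limit point. -/
theorem statement9 {n : ℕ} {P Q : Type*} [Fintype P] [Fintype Q]
    (D : Setting n P Q) (t : ℕ → ℝ) (htpos : ∀ k, 0 < t k)
    (ht0 : Filter.Tendsto t Filter.atTop (nhds 0))
    (X Y : ℕ → Vec n) (Mk : ℕ → SMult n P Q)
    (hK : ∀ k, KKTAt D (t k) (X k) (Y k) (Mk k))
    (hzero : ∀ k,
      (∀ q ∉ Q0 D (X k), (Mk k).mu1 q = 0) ∧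
      (∀ i ∉ Eact D (Y k), (Mk k).mu2 i = 0) ∧
      (∀ i ∉ Hge (t k) (X k) (Y k), (Mk k).etaGe i = 0) ∧
      (∀ i ∉ Hle (t k) (X k) (Y k), (Mk k).etaLe i = 0) ∧
      (∀ i ∉ Nact (Y k), (Mk k).nu i = 0))
    (xb yb : Vec n)
    (hconv : Filter.Tendsto (fun k => ((X k, Y k) : Vec n × Vec n))
      Filter.atTop (nhds (xb, yb)))
    (hfeas : feasR D xb yb) (hlicq : MPOC_LICQ D xb yb) :
    ∃ Mb : TMult n P Q, TStatAt D xb yb Mb ∧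
      (∀ p, Filter.Tendsto (fun k => (Mk k).lam p) Filter.atTop (nhds (Mb.lam p))) ∧
      (∀ q, Filter.Tendsto (fun k => (Mk k).mu1 q) Filter.atTop (nhds (Mb.mu1 q))) ∧
      (∀ i, Filter.Tendsto (fun k => (Mk k).mu2 i) Filter.atTop (nhds (Mb.mu2 i))) ∧
      Filter.Tendsto (fun k => (Mk k).mu3) Filter.atTop (nhds Mb.mu3) ∧
      (∀ i ∈ a01 xb yb,
        Filter.Tendsto (fun k => ((Mk k).etaGe i - (Mk k).etaLe i) * Y k i)
          Filter.atTop (nhds (Mb.sig1 i))) ∧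
      (∀ i ∈ a10 xb yb,
        Filter.Tendsto (fun k => (Mk k).nu i + ((Mk k).etaGe i - (Mk k).etaLe i) * X k i)
          Filter.atTop (nhds (Mb.sig2 i))) ∧
      (∀ i ∈ a00 xb yb,
        Filter.Tendsto (fun k => ((Mk k).etaGe i - (Mk k).etaLe i) * Y k i)
          Filter.atTop (nhds (Mb.rho1 i)) ∧
        Filter.Tendsto (fun k => (Mk k).nu i + ((Mk k).etaGe i - (Mk k).etaLe i) * X k i)
          Filter.atTop (nhds (Mb.rho2 i))) :=
  statement9_general D t htpos X Y Mk hK hzero xb yb hconv hfeas hlicq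

end Scholtes
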